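/- Suppose P is row-stochastic on finite S satisfying the Doeblin condition P^m(s,·) ≥ q ψ(·) for all s, with m ≥ 1, q ∈ (0,1]. Then for every k ≥ 0 and v : S → ℝ, sp(P^{km} v) ≤ (1−q)^k sp(v). -/
import Mathlib


open Matrix

lemma pow_nonneg_entries {S : Type*} [Fintype S] [DecidableEq S]
    (P : Matrix S S ℝ) (hP0 : ∀ s s', 0 ≤ P s s') (n : ℕ) :
    ∀ s s', 0 ≤ (P ^ n) s s' := by
  induction n with
  | zero => intro s s'; simp [Matrix.one_apply]; positivity
  | succ n ih =>
    intro s s'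
    rw [pow_succ, Matrix.mul_apply]
    exact Finset.sum_nonneg fun j _ => mul_nonneg (ih s j) (hP0 j s')

lemma pow_row_sum {S : Type*} [Fintype S] [DecidableEq S]
    (P : Matrix S S ℝ) (hP1 : ∀ s, ∑ s', P s s' = 1) (n : ℕ) :
    ∀ s, ∑ s', (P ^ n) s s' = 1 := by
  induction n with
  | zero => intro s; simp [Matrix.one_apply]
  | succ n ih =>
    intro s
    rw [pow_succ]
    simp only [Matrix.mul_apply]
    rw [Finset.sum_comm]
    simp only [← Finset.mul_sum, hP1, mul_one]
    exact ih s

lemma one_step_span {S : Type*} [Fintype S] [Nonempty S]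
    (Q : Matrix S S ℝ) (hQ0 : ∀ s s', 0 ≤ Q s s') (hQ1 : ∀ s, ∑ s', Q s s' = 1)
    (q : ℝ) (ψ : S → ℝ) (hψ0 : ∀ s, 0 ≤ ψ s) (hψ1 : ∑ s, ψ s = 1)
    (hdQ : ∀ s s', q * ψ s' ≤ Q s s') (v : S → ℝ) :
    (Finset.univ.sup' Finset.univ_nonempty (Q *ᵥ v)) -
      (Finset.univ.inf' Finset.univ_nonempty (Q *ᵥ v)) ≤
    (1 - q) * ((Finset.univ.sup' Finset.univ_nonempty v) -
      (Finset.univ.inf' Finset.univ_nonempty v)) := by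
  set M := Finset.univ.sup' Finset.univ_nonempty v with hM
  set μ := Finset.univ.inf' Finset.univ_nonempty v with hμ
  set c := ∑ s', ψ s' * v s' with hc
  have hvM : ∀ s, v s ≤ M := fun s => Finset.le_sup' v (Finset.mem_univ s)
  have hvμ : ∀ s, μ ≤ v s := fun s => Finset.inf'_le v (Finset.mem_univ s)
  have hRsum : ∀ s, ∑ s', (Q s s' - q * ψ s') = 1 - q * ∑ s', ψ s' := by
    intro s
    rw [Finset.sum_sub_distrib, hQ1, ← Finset.mul_sum]
  have hub : ∀ s, (Q *ᵥ v) s ≤ q * c + (1 - q * ∑ s', ψ s') * M := by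
    intro s
    have : (Q *ᵥ v) s = q * c + ∑ s', (Q s s' - q * ψ s') * v s' := by
      simp only [Matrix.mulVec, dotProduct, hc, Finset.mul_sum]
      rw [← Finset.sum_add_distrib]
      congr 1; ext s'; ring
    rw [this]
    gcongr with s'
    calc ∑ s', (Q s s' - q * ψ s') * v s'
        ≤ ∑ s', (Q s s' - q * ψ s') * M := by
          apply Finset.sum_le_sum
          intro s' _
          exact mul_le_mul_of_nonneg_left (hvM s') (by linarith [hdQ s s'])
      _ = (1 - q * ∑ s', ψ s') * M := by rw [← Finset.sum_mul, hRsum]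
  have hlb : ∀ s, q * c + (1 - q * ∑ s', ψ s') * μ ≤ (Q *ᵥ v) s := by
    intro s
    have : (Q *ᵥ v) s = q * c + ∑ s', (Q s s' - q * ψ s') * v s' := by
      simp only [Matrix.mulVec, dotProduct, hc, Finset.mul_sum]
      rw [← Finset.sum_add_distrib]
      congr 1; ext s'; ring
    rw [this]
    gcongr
    calc (1 - q * ∑ s', ψ s') * μ = ∑ s', (Q s s' - q * ψ s') * μ := by
          rw [← Finset.sum_mul, hRsum]
      _ ≤ ∑ s', (Q s s' - q * ψ s') * v s' := by
          apply Finset.sum_le_sum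
          intro s' _
          exact mul_le_mul_of_nonneg_left (hvμ s') (by linarith [hdQ s s'])
  have h1 : Finset.univ.sup' Finset.univ_nonempty (Q *ᵥ v) ≤
      q * c + (1 - q * ∑ s', ψ s') * M :=
    Finset.sup'_le _ _ fun s _ => hub s
  have h2 : q * c + (1 - q * ∑ s', ψ s') * μ ≤
      Finset.univ.inf' Finset.univ_nonempty (Q *ᵥ v) :=
    Finset.le_inf' _ _ fun s _ => hlb s
  rw [hψ1] at h1 h2
  linarith

/-- Iterated span contraction under the Doeblin condition:
sp(P^{km} v) ≤ (1−q)^k sp(v). -/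
theorem span_contraction_iter_of_doeblin {S : Type*} [Fintype S] [Nonempty S] [DecidableEq S]
    (P : Matrix S S ℝ) (hP0 : ∀ s s', 0 ≤ P s s') (hP1 : ∀ s, ∑ s', P s s' = 1)
    (m : ℕ) (hm : 1 ≤ m) (q : ℝ) (hq0 : 0 < q) (hq1 : q ≤ 1)
    (ψ : S → ℝ) (hψ0 : ∀ s, 0 ≤ ψ s) (hψ1 : ∑ s, ψ s = 1)
    (hdoeblin : ∀ s s', q * ψ s' ≤ (P ^ m) s s')
    (sp : (S → ℝ) → ℝ)
    (hsp : ∀ u : S → ℝ, sp u =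
      (Finset.univ.sup' Finset.univ_nonempty u) - (Finset.univ.inf' Finset.univ_nonempty u)) :
    ∀ (k : ℕ) (v : S → ℝ), sp ((P ^ (k * m)) *ᵥ v) ≤ (1 - q) ^ k * sp v := by
  have hQ0 := pow_nonneg_entries P hP0 m
  have hQ1 := pow_row_sum P hP1 m
  intro k
  induction k with
  | zero => intro v; simp [hsp]
  | succ k ih =>
    intro v
    have key : (P ^ ((k + 1) * m)) *ᵥ v = (P ^ (k * m)) *ᵥ ((P ^ m) *ᵥ v) := by
      rw [add_mul, one_mul, pow_add, ← Matrix.mulVec_mulVec]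
    rw [key]
    calc sp ((P ^ (k * m)) *ᵥ ((P ^ m) *ᵥ v)) ≤ (1 - q) ^ k * sp ((P ^ m) *ᵥ v) := ih _
      _ ≤ (1 - q) ^ k * ((1 - q) * sp v) := by
          apply mul_le_mul_of_nonneg_left _ (pow_nonneg (by linarith) k)
          rw [hsp, hsp]
          exact one_step_span _ hQ0 hQ1 q ψ hψ0 hψ1 hdoeblin v
      _ = (1 - q) ^ (k + 1) * sp v := by ring
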